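/- Assume m ≥ 2 and that the first syzygy module ker φ is a free S-module (i.e., the projective dimension of I is at most 1). Then I has linear relations if and only if the syzygy graph G_I is a connected graph. -/

import Mathlib

open MvPolynomial Finset

attribute [local instance] Classical.propDecidable

/-- The (first linear) syzygy graph of a squarefree monomial ideal whose generators
have supports `F i`, all of cardinality `d`: vertices are the generators, and two
generators are adjacent iff their supports meet in `d - 1` elements (equivalently,
there are variables `x, y` with `x * u i = y * u j`). -/
def syzGraph {n m : ℕ} (F : Fin m → Finset (Fin n)) (d : ℕ) : SimpleGraph (Fin m) where
  Adj i j := i ≠ j ∧ (F i ∩ F j).card + 1 = d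
  symm := by
    constructor
    intro i j h
    exact ⟨h.1.symm, by rw [Finset.inter_comm]; exact h.2⟩
  loopless := by constructor; intro i h; exact h.1 rfl

/-- The map `φ : S^ι → S`, `e i ↦ u i`. -/
noncomputable def phi {R : Type*} [CommRing R] {ι : Type*} [Fintype ι] (u : ι → R) :
    (ι → R) →ₗ[R] R where
  toFun c := ∑ i, c i * u i
  map_add' a b := by simp [add_mul, Finset.sum_add_distrib]
  map_smul' r a := by simp [Finset.mul_sum, mul_assoc]

/-- The set of linear syzygies `x_a e_i - x_b e_j` with `x_a u_i = x_b u_j`. -/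
def linSyz {k : Type*} [Field k] {n : ℕ} {ι : Type*} [DecidableEq ι]
    (u : ι → MvPolynomial (Fin n) k) : Set (ι → MvPolynomial (Fin n) k) :=
  { w | ∃ (i j : ι) (a b : Fin n), X a * u i = X b * u j ∧
      w = Pi.single i (X a) - Pi.single j (X b) }

/-- `I = (u i : i)` has linear relations: `ker φ` is generated by the linear syzygies. -/
def HasLinRel {k : Type*} [Field k] {n : ℕ} {ι : Type*} [Fintype ι] [DecidableEq ι]
    (u : ι → MvPolynomial (Fin n) k) : Prop :=
  Submodule.span (MvPolynomial (Fin n) k) (linSyz u) = LinearMap.ker (phi u)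

/-- `I = (u 1, …, u m)` has linear quotients: for some ordering of the generators, each
colon ideal `(u_{σ 1}, …, u_{σ (i-1)}) : u_{σ i}` is generated by a subset of the variables. -/
def LinQuot {k : Type*} [Field k] {n m : ℕ} (u : Fin m → MvPolynomial (Fin n) k) : Prop :=
  ∃ σ : Equiv.Perm (Fin m), ∀ i : Fin m, i.val ≠ 0 →
    ∃ T : Set (Fin n),
      Submodule.colon (Ideal.span ((fun j => u (σ j)) '' {j : Fin m | j < i}))
        (Ideal.span {u (σ i)}) = Ideal.span (X '' T)

/-- Variable-decomposability of a monomial ideal given by its (finite) minimal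
generating set `G`: either `G` is a singleton (principal ideal), or there is a shedding
variable `x l` such that both `I_{x l}` and `I^{x l}` are variable-decomposable. -/
inductive VarDecomp {k : Type*} [Field k] {n : ℕ} :
    Finset (MvPolynomial (Fin n) k) → Prop
  | principal (u : MvPolynomial (Fin n) k) : VarDecomp {u}
  | shed (G : Finset (MvPolynomial (Fin n) k)) (l : Fin n)
      (hne : (G.filter fun u => ¬ X l ∣ u).Nonempty)
      (hshed : ∀ u ∈ G.filter (fun u => ¬ X l ∣ u),
        ∃ v ∈ G.filter (fun u => X l ∣ u),
          Submodule.colon (Ideal.span {v}) (Ideal.span {u}) = Ideal.span {X l})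
      (h1 : VarDecomp (G.filter fun u => ¬ X l ∣ u))
      (h2 : VarDecomp (G.filter fun u => X l ∣ u)) : VarDecomp G

/-!
If `G_I` is disconnected, let `A` be the component of `u_i` and `u_j ∉ A`. The map
`e_p ↦ u_p` for `p ∈ A`, `e_p ↦ 0` otherwise, kills every linear syzygy (the two generators of a
linear syzygy are equal or adjacent) but not the Koszul syzygy `u_j e_i - u_i e_j`.

Conversely, `K = ker φ` is graded and vanishes in degree `0`, so by graded Nakayama it is
generated by linear syzygies once these span `K / 𝔪 K`. Summing edge syzygies along paths to a
fixed vertex `i₀` gives `m - 1` linear syzygies whose values at `x = 1` are `e_i - e_{i₀}`. They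
stay independent in `K / 𝔪 K`, because `𝔪 K` has nothing in degree `1`, while `K` is free of rank
at most `m - 1` as `φ ≠ 0`; so they span.
-/

namespace MvPolynomial

section Grading

variable {σ R ι : Type*} [CommRing R]

attribute [local instance] MvPolynomial.gradedAlgebra in
theorem homogeneousComponent_mul (j : ℕ) (p q : MvPolynomial σ R) :
    homogeneousComponent j (p * q) =
      ∑ x ∈ antidiagonal j, homogeneousComponent x.1 p * homogeneousComponent x.2 q := by
  simp only [← decomposition.decompose'_apply]
  exact (congrArg (fun x => (x j : MvPolynomial σ R))
    (DirectSum.decompose_mul (homogeneousSubmodule σ R) p q)).trans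
    (DirectSum.coe_mul_apply_eq_sum_antidiagonal _ _ _ j)

attribute [local instance] MvPolynomial.gradedAlgebra in
theorem homogeneousComponent_add_mul_of_isHomogeneous {p q : MvPolynomial σ R} {e : ℕ}
    (hq : q.IsHomogeneous e) (j : ℕ) :
    homogeneousComponent (j + e) (p * q) = homogeneousComponent j p * q := by
  simp only [← decomposition.decompose'_apply]
  exact DirectSum.coe_decompose_mul_add_of_right_mem (homogeneousSubmodule σ R)
    ((mem_homogeneousSubmodule e q).2 hq)

variable (ι) in
noncomputable def piHomogeneousComponent (j : ℕ) :
    (ι → MvPolynomial σ R) →ₗ[R] ι → MvPolynomial σ R :=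
  (homogeneousComponent j).compLeft ι

@[simp]
theorem piHomogeneousComponent_apply (j : ℕ) (z : ι → MvPolynomial σ R) (i : ι) :
    piHomogeneousComponent ι j z i = homogeneousComponent j (z i) :=
  rfl

theorem piHomogeneousComponent_smul (j : ℕ) (p : MvPolynomial σ R) (z : ι → MvPolynomial σ R) :
    piHomogeneousComponent ι j (p • z) =
      ∑ x ∈ antidiagonal j, homogeneousComponent x.1 p • piHomogeneousComponent ι x.2 z := by
  funext i
  simp [homogeneousComponent_mul, Finset.sum_apply]

theorem piHomogeneousComponent_idem (j : ℕ) (z : ι → MvPolynomial σ R) :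
    piHomogeneousComponent ι j (piHomogeneousComponent ι j z) = piHomogeneousComponent ι j z := by
  funext i
  exact homogeneousComponent_eq_self (homogeneousComponent_isHomogeneous j (z i))

theorem piHomogeneousComponent_of_isHomogeneous {z : ι → MvPolynomial σ R} {e : ℕ}
    (hz : ∀ i, (z i).IsHomogeneous e) (j : ℕ) :
    piHomogeneousComponent ι j z = if j = e then z else 0 := by
  funext i
  rw [piHomogeneousComponent_apply, homogeneousComponent_of_mem (hz i)]
  split_ifs <;> rfl

theorem sum_piHomogeneousComponent [Fintype ι] (z : ι → MvPolynomial σ R) :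
    ∑ j ∈ Finset.range ((Finset.univ : Finset ι).sup (fun i => (z i).totalDegree) + 1),
      piHomogeneousComponent ι j z = z := by
  funext i
  rw [Finset.sum_apply]
  conv_rhs => rw [← sum_homogeneousComponent (z i)]
  refine (Finset.sum_subset (Finset.range_subset_range.2 ?_) fun j _ hj => ?_).symm
  · exact Nat.succ_le_succ (le_sup (f := fun i => (z i).totalDegree) (mem_univ i))
  · exact homogeneousComponent_eq_zero _ _ (by simpa using hj)

variable {M : Submodule (MvPolynomial σ R) (ι → MvPolynomial σ R)}

theorem piHomogeneousComponent_mem_span {s : Set (ι → MvPolynomial σ R)} {e : ℕ}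
    (hs : ∀ g ∈ s, ∀ i, (g i).IsHomogeneous e) (j : ℕ) {z : ι → MvPolynomial σ R}
    (hz : z ∈ Submodule.span (MvPolynomial σ R) s) :
    piHomogeneousComponent ι j z ∈ Submodule.span (MvPolynomial σ R) s := by
  induction hz using Submodule.span_induction generalizing j with
  | mem g hg =>
    rw [piHomogeneousComponent_of_isHomogeneous (hs g hg)]
    split_ifs
    · exact Submodule.subset_span hg
    · exact zero_mem _
  | zero => simp
  | add y z _ _ hy hz => simpa using add_mem (hy j) (hz j)
  | smul p y _ hy =>
    rw [piHomogeneousComponent_smul]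
    exact sum_mem fun x _ => Submodule.smul_mem _ _ (hy x.2)

theorem piHomogeneousComponent_mem_of_mem_ker_constantCoeff_smul
    {N : Submodule (MvPolynomial σ R) (ι → MvPolynomial σ R)} {j : ℕ}
    (hN : ∀ c < j, ∀ y ∈ N, piHomogeneousComponent ι c y ∈ M) {z : ι → MvPolynomial σ R}
    (hz : z ∈ RingHom.ker (constantCoeff (σ := σ) (R := R)) • N) :
    piHomogeneousComponent ι j z ∈ M := by
  refine Submodule.smul_induction_on hz (fun p hp y hy => ?_) fun y z hy hz => by
    simpa using add_mem hy hz
  rw [piHomogeneousComponent_smul]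
  refine sum_mem fun x hx => ?_
  rcases Nat.eq_zero_or_pos x.1 with h0 | hpos
  · rw [h0, homogeneousComponent_zero, ← constantCoeff_eq, RingHom.mem_ker.1 hp, C_0,
      zero_smul]
    exact zero_mem _
  · exact M.smul_mem _ (hN x.2 (by rw [HasAntidiagonal.mem_antidiagonal] at hx; omega) y hy)

/-- Graded Nakayama lemma. -/
theorem le_of_le_sup_ker_constantCoeff_smul [Fintype ι]
    {N : Submodule (MvPolynomial σ R) (ι → MvPolynomial σ R)}
    (hN : ∀ j, ∀ z ∈ N, piHomogeneousComponent ι j z ∈ N)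
    (hM : ∀ j, ∀ z ∈ M, piHomogeneousComponent ι j z ∈ M)
    (h : N ≤ M ⊔ RingHom.ker (constantCoeff (σ := σ) (R := R)) • N) : N ≤ M := by
  suffices hcomp : ∀ j, ∀ z ∈ N, piHomogeneousComponent ι j z ∈ M by
    intro z hz
    rw [← sum_piHomogeneousComponent z]
    exact sum_mem fun j _ => hcomp j z hz
  intro j
  induction j using Nat.strong_induction_on with
  | _ j ih =>
    intro z hz
    obtain ⟨y, hy, w, hw, hyw⟩ := Submodule.mem_sup.1 (h (hN j z hz))
    rw [← piHomogeneousComponent_idem, ← hyw, map_add]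
    exact add_mem (hM j y hy) (piHomogeneousComponent_mem_of_mem_ker_constantCoeff_smul ih hw)

end Grading

section SquarefreeMonomials

variable {σ R ι : Type*} [CommRing R]

theorem prod_X_eq_monomial (s : Finset σ) :
    ∏ l ∈ s, (X l : MvPolynomial σ R) = monomial (∑ l ∈ s, Finsupp.single l 1) 1 :=
  (monomial_sum_one s _).symm

theorem isHomogeneous_prod_X (s : Finset σ) :
    (∏ l ∈ s, (X l : MvPolynomial σ R)).IsHomogeneous s.card := by
  simpa using IsHomogeneous.prod s (fun l => (X l : MvPolynomial σ R)) (fun _ => 1)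
    fun l _ => isHomogeneous_X R l

theorem linearIndependent_prod_X {F : ι → Finset σ} (hF : Function.Injective F) :
    LinearIndependent R fun i => ∏ l ∈ F i, (X l : MvPolynomial σ R) := by
  have hexp : Function.Injective fun s : Finset σ => ∑ l ∈ s, Finsupp.single l 1 := by
    intro s t hst
    have := congrArg Finsupp.toMultiset hst
    simp only [Finsupp.toMultiset_sum_single, one_nsmul] at this
    exact Finset.val_injective this
  have := (basisMonomials σ R).linearIndependent.comp _ (hexp.comp hF)
  simp only [coe_basisMonomials] at this
  simp only [prod_X_eq_monomial]
  exact this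

theorem degrees_X_mul_prod_X [Nontrivial R] (a : σ) (s : Finset σ) :
    (X a * ∏ l ∈ s, (X l : MvPolynomial σ R)).degrees = a ::ₘ s.val := by
  rw [prod_X_eq_monomial, X, monomial_mul, one_mul, degrees_monomial_eq _ _ one_ne_zero,
    map_add, Finsupp.toMultiset_sum_single, Finsupp.toMultiset_single, one_nsmul, one_nsmul,
    Multiset.singleton_add]

end SquarefreeMonomials

end MvPolynomial

section Syzygies

variable {σ R ι : Type*} [CommRing R] [Fintype ι]

theorem phi_single [DecidableEq ι] (u : ι → MvPolynomial σ R) (i : ι) (p : MvPolynomial σ R) :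
    phi u (Pi.single i p) = p * u i := by
  simp [phi, Pi.single_apply]

variable {u : ι → MvPolynomial σ R} {d : ℕ}

theorem phi_piHomogeneousComponent (hu : ∀ i, (u i).IsHomogeneous d) (j : ℕ)
    (z : ι → MvPolynomial σ R) :
    phi u (piHomogeneousComponent ι j z) = homogeneousComponent (j + d) (phi u z) := by
  simp [phi, map_sum, homogeneousComponent_add_mul_of_isHomogeneous (hu _)]

theorem piHomogeneousComponent_mem_ker_phi (hu : ∀ i, (u i).IsHomogeneous d) (j : ℕ)
    {z : ι → MvPolynomial σ R} (hz : z ∈ LinearMap.ker (phi u)) :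
    piHomogeneousComponent ι j z ∈ LinearMap.ker (phi u) := by
  rw [LinearMap.mem_ker] at hz ⊢
  rw [phi_piHomogeneousComponent hu, hz, map_zero]

theorem piHomogeneousComponent_zero_of_mem_ker_phi (hu : ∀ i, (u i).IsHomogeneous d)
    (hli : LinearIndependent R u) {z : ι → MvPolynomial σ R} (hz : z ∈ LinearMap.ker (phi u)) :
    piHomogeneousComponent ι 0 z = 0 := by
  have h0 := piHomogeneousComponent_mem_ker_phi hu 0 hz
  simp only [LinearMap.mem_ker, phi, LinearMap.coe_mk, AddHom.coe_mk,
    piHomogeneousComponent_apply, homogeneousComponent_zero, ← smul_eq_C_mul] at h0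
  funext i
  simp [homogeneousComponent_zero, Fintype.linearIndependent_iff.1 hli _ h0 i]

end Syzygies

section SyzygyGraph

variable {R : Type*} [CommRing R] {n m d : ℕ} {F : Fin m → Finset (Fin n)}

theorem exists_X_mul_eq_of_syzGraph_adj (hcard : ∀ i, (F i).card = d) {i j : Fin m}
    (h : (syzGraph F d).Adj i j) :
    ∃ a b, X a * ∏ l ∈ F i, (X l : MvPolynomial (Fin n) R) = X b * ∏ l ∈ F j, X l := by
  have hdiff : ∀ {i j}, (syzGraph F d).Adj i j → ∃ a, F j \ F i = {a} := fun {i j} h => by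
    have := card_inter_add_card_sdiff (F j) (F i)
    rw [inter_comm, hcard j] at this
    exact card_eq_one.1 (by have := h.2; omega)
  obtain ⟨a, ha⟩ := hdiff h
  obtain ⟨b, hb⟩ := hdiff h.symm
  refine ⟨a, b, ?_⟩
  calc X a * ∏ l ∈ F i, X l = ∏ l ∈ F i ∪ F j, (X l : MvPolynomial (Fin n) R) := by
        rw [← prod_sdiff subset_union_left, union_sdiff_left, ha, prod_singleton]
    _ = X b * ∏ l ∈ F j, X l := by
        rw [← prod_sdiff subset_union_right, union_sdiff_right, hb, prod_singleton]

theorem syzGraph_adj_of_X_mul_eq [Nontrivial R] (hinj : Function.Injective F)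
    (hcard : ∀ i, (F i).card = d) {i j : Fin m} (hij : i ≠ j) {a b : Fin n}
    (h : X a * ∏ l ∈ F i, (X l : MvPolynomial (Fin n) R) = X b * ∏ l ∈ F j, X l) :
    (syzGraph F d).Adj i j := by
  have hdeg := congrArg degrees h
  rw [degrees_X_mul_prod_X, degrees_X_mul_prod_X] at hdeg
  have hsub : F i \ F j ⊆ {b} := by
    intro l hl
    rw [mem_sdiff] at hl
    have hl' : l ∈ b ::ₘ (F j).val := hdeg ▸ Multiset.mem_cons_of_mem hl.1
    rcases Multiset.mem_cons.1 hl' with rfl | hlj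
    · exact mem_singleton_self l
    · exact absurd hlj hl.2
  have hne : (F i \ F j).Nonempty := sdiff_nonempty.2 fun hle =>
    hij (hinj (eq_of_subset_of_card_le hle (by rw [hcard, hcard])))
  have hone : (F i \ F j).card = 1 :=
    le_antisymm ((card_le_card hsub).trans (card_singleton b).le) hne.card_pos
  exact ⟨hij, by rw [← hone, ← hcard i, card_inter_add_card_sdiff]⟩

theorem syzGraph_reachable_of_X_mul_eq [Nontrivial R] (hinj : Function.Injective F)
    (hcard : ∀ i, (F i).card = d) {i j : Fin m} {a b : Fin n}
    (h : X a * ∏ l ∈ F i, (X l : MvPolynomial (Fin n) R) = X b * ∏ l ∈ F j, X l) :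
    (syzGraph F d).Reachable i j := by
  rcases eq_or_ne i j with rfl | hij
  · rfl
  · exact (syzGraph_adj_of_X_mul_eq hinj hcard hij h).reachable

end SyzygyGraph

section LinearSyzygies

variable {k ι : Type*} [Field k] {n : ℕ} [DecidableEq ι] {u : ι → MvPolynomial (Fin n) k}

theorem isHomogeneous_of_mem_linSyz {w : ι → MvPolynomial (Fin n) k} (hw : w ∈ linSyz u)
    (i : ι) : (w i).IsHomogeneous 1 := by
  obtain ⟨p, q, a, b, -, rfl⟩ := hw
  simp only [Pi.sub_apply, Pi.single_apply]
  refine IsHomogeneous.sub ?_ ?_ <;> split_ifs <;>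
    first | exact isHomogeneous_X k _ | exact isHomogeneous_zero _ _ _

variable [Fintype ι]

theorem span_linSyz_le_ker_phi (u : ι → MvPolynomial (Fin n) k) :
    Submodule.span (MvPolynomial (Fin n) k) (linSyz u) ≤ LinearMap.ker (phi u) := by
  rw [Submodule.span_le]
  rintro w ⟨i, j, a, b, hab, rfl⟩
  simp [phi_single, hab]

theorem span_linSyz_le_ker_phi_indicator (A : Set ι)
    (hA : ∀ i j a b, X a * u i = X b * u j → (i ∈ A ↔ j ∈ A)) :
    Submodule.span (MvPolynomial (Fin n) k) (linSyz u) ≤ LinearMap.ker (phi (A.indicator u)) := by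
  rw [Submodule.span_le]
  rintro w ⟨i, j, a, b, hab, rfl⟩
  have hij := hA i j a b hab
  by_cases hi : i ∈ A
  · simp [phi_single, hab, hi, hij.1 hi]
  · simp [phi_single, hi, mt hij.2 hi]

theorem connected_of_hasLinRel [Nonempty ι] (hu : ∀ i, u i ≠ 0) (G : SimpleGraph ι)
    (hG : ∀ i j a b, X a * u i = X b * u j → G.Reachable i j) (h : HasLinRel u) :
    G.Connected := by
  refine (SimpleGraph.connected_iff G).2 ⟨fun i j => ?_, inferInstance⟩
  by_contra hij
  let A : Set ι := {p | G.Reachable i p}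
  have hA : ∀ p q a b, X a * u p = X b * u q → (p ∈ A ↔ q ∈ A) := fun p q a b hpq =>
    ⟨fun hp => hp.trans (hG p q a b hpq), fun hq => hq.trans (hG p q a b hpq).symm⟩
  have hkoszul : Pi.single i (u j) - Pi.single j (u i) ∈ LinearMap.ker (phi u) := by
    simp [phi_single, mul_comm]
  rw [← h] at hkoszul
  have := span_linSyz_le_ker_phi_indicator A hA hkoszul
  simp only [LinearMap.mem_ker, map_sub, phi_single] at this
  have hiA : i ∈ A := SimpleGraph.Reachable.refl i
  have hjA : j ∉ A := hij
  simp only [Set.indicator_of_mem hiA, Set.indicator_of_notMem hjA, mul_zero, sub_zero] at this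
  exact mul_ne_zero (hu j) (hu i) this

end LinearSyzygies

theorem card_add_one_le_finrank_of_basis_ker {R M β : Type*} [CommRing R] [IsDomain R]
    [AddCommGroup M] [Module R M] [Module.Finite R M] [Fintype β] {f : M →ₗ[R] R} {x : M}
    (hx : f x ≠ 0) (B : Module.Basis β R (LinearMap.ker f)) :
    Fintype.card β + 1 ≤ Module.finrank R M := by
  have hrange : 0 < Module.finrank R (LinearMap.range f) :=
    Module.finrank_pos_iff_exists_ne_zero.2 ⟨⟨f x, x, rfl⟩, fun h => hx (congrArg Subtype.val h)⟩
  rw [← (LinearMap.ker f).finrank_quotient_add_finrank, Module.finrank_eq_card_basis B,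
    f.quotKerEquivRange.finrank_eq]
  omega

section Nakayama

variable {k σ ι β : Type*} [Field k]
  {K : Submodule (MvPolynomial σ k) (ι → MvPolynomial σ k)}

/-- The map `K → K / 𝔪 K ≅ k ^ β`, where `𝔪` is the ideal of polynomials without constant
term. -/
noncomputable def constantCoeffRepr (B : Module.Basis β (MvPolynomial σ k) K) : K →ₗ[k] β → k :=
  (lcoeff k 0 : MvPolynomial σ k →ₗ[k] k).compLeft β ∘ₗ
    Finsupp.lcoeFun ∘ₗ (B.repr : K →ₗ[MvPolynomial σ k] β →₀ MvPolynomial σ k).restrictScalars k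

@[simp]
theorem constantCoeffRepr_apply (B : Module.Basis β (MvPolynomial σ k) K) (z : K) (b : β) :
    constantCoeffRepr B z b = constantCoeff (B.repr z b) :=
  rfl

theorem coe_mem_ker_constantCoeff_smul_of_constantCoeffRepr_eq_zero [Fintype β]
    (B : Module.Basis β (MvPolynomial σ k) K) {z : K} (hz : constantCoeffRepr B z = 0) :
    (z : ι → MvPolynomial σ k) ∈ RingHom.ker (constantCoeff (σ := σ) (R := k)) • K := by
  rw [← B.sum_repr z, Submodule.coe_sum]
  exact sum_mem fun b _ =>
    Submodule.smul_mem_smul (RingHom.mem_ker.2 (congrFun hz b)) (B b).2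

theorem le_span_sup_smul_of_linearIndependent {κ : Type*} [Fintype κ] [Fintype β]
    (B : Module.Basis β (MvPolynomial σ k) K)
    (hK : ∀ z ∈ K, piHomogeneousComponent ι 0 z = 0) {h : κ → ι → MvPolynomial σ k}
    (hhK : ∀ t, h t ∈ K) (hh : ∀ t, piHomogeneousComponent ι 1 (h t) = h t)
    (hli : LinearIndependent k h) (hcard : Fintype.card β ≤ Fintype.card κ) :
    K ≤ Submodule.span (MvPolynomial σ k) (Set.range h) ⊔
      RingHom.ker (constantCoeff (σ := σ) (R := k)) • K := by
  let g : κ → K := fun t => ⟨h t, hhK t⟩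
  have hg : ∀ c : κ → k, (Fintype.linearCombination k g c : ι → MvPolynomial σ k) =
      ∑ t, c t • h t := fun c => by
    simp [g, Fintype.linearCombination_apply]
  let T := constantCoeffRepr B ∘ₗ Fintype.linearCombination k g
  have hT : Function.Injective T := by
    refine (injective_iff_map_eq_zero T).2 fun c hc => ?_
    have hsmul := coe_mem_ker_constantCoeff_smul_of_constantCoeffRepr_eq_zero B hc
    have hdeg : piHomogeneousComponent ι 1 (∑ t, c t • h t) = 0 := by
      rw [← hg]
      refine (Submodule.mem_bot _).1
        (piHomogeneousComponent_mem_of_mem_ker_constantCoeff_smul (fun j hj y hy => ?_) hsmul)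
      rw [Nat.lt_one_iff.1 hj, hK y hy]
      exact zero_mem _
    simp only [map_sum, map_smul, hh] at hdeg
    exact funext (Fintype.linearIndependent_iff.1 hli c hdeg)
  have hTs : Function.Surjective T := by
    refine (LinearMap.injective_iff_surjective_of_finrank_eq_finrank ?_).1 hT
    have := LinearMap.finrank_le_finrank_of_injective hT
    simp only [Module.finrank_fintype_fun_eq_card] at this ⊢
    omega
  intro z hz
  obtain ⟨c, hc⟩ := hTs (constantCoeffRepr B ⟨z, hz⟩)
  refine Submodule.mem_sup.2 ⟨_, ?_, _,
    coe_mem_ker_constantCoeff_smul_of_constantCoeffRepr_eq_zero B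
      (z := ⟨z, hz⟩ - Fintype.linearCombination k g c) (by rw [map_sub, ← hc]; exact sub_self _),
    add_sub_cancel _ _⟩
  rw [hg]
  exact sum_mem fun t _ =>
    Submodule.smul_of_tower_mem _ _ (Submodule.subset_span (Set.mem_range_self t))

end Nakayama

section SquarefreeIdeal

variable {k : Type*} [Field k] {n m d : ℕ} {F : Fin m → Finset (Fin n)}

theorem linearIndependent_single_sub_single {R ι : Type*} [CommRing R] [DecidableEq ι]
    (i₀ : ι) :
    LinearIndependent R fun i : {i // i ≠ i₀} => (Pi.single (i : ι) 1 - Pi.single i₀ 1 : ι → R) :=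
  by
  refine LinearIndependent.of_comp (LinearMap.funLeft R R (Subtype.val : {i // i ≠ i₀} → ι)) ?_
  convert Pi.linearIndependent_single_one {i // i ≠ i₀} R with i
  funext j
  simp [Pi.single_apply, j.2, Subtype.ext_iff]

theorem exists_linear_mem_span_linSyz_of_reachable (hcard : ∀ i, (F i).card = d) {p q : Fin m}
    (hpq : (syzGraph F d).Reachable p q) :
    ∃ h ∈ Submodule.span (MvPolynomial (Fin n) k)
        (linSyz fun i => ∏ l ∈ F i, (X l : MvPolynomial (Fin n) k)),
      piHomogeneousComponent (Fin m) 1 h = h ∧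
        (aeval fun _ => (1 : k)).toLinearMap.compLeft (Fin m) h =
          Pi.single p 1 - Pi.single q 1 := by
  obtain ⟨w⟩ := hpq
  induction w with
  | nil => exact ⟨0, zero_mem _, map_zero _, by simp⟩
  | @cons p q r hpq w ih =>
    obtain ⟨h, hL, h1, hev⟩ := ih
    obtain ⟨a, b, hab⟩ := exists_X_mul_eq_of_syzGraph_adj (R := k) hcard hpq
    have hmem : (Pi.single p (X a) - Pi.single q (X b) : Fin m → MvPolynomial (Fin n) k) ∈
        linSyz fun i => ∏ l ∈ F i, (X l : MvPolynomial (Fin n) k) := ⟨p, q, a, b, hab, rfl⟩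
    refine ⟨_ + h, add_mem (Submodule.subset_span hmem) hL, ?_, ?_⟩
    · rw [map_add, h1, piHomogeneousComponent_of_isHomogeneous (isHomogeneous_of_mem_linSyz hmem),
        if_pos rfl]
    · have hedge : (aeval fun _ => (1 : k)).toLinearMap.compLeft (Fin m)
          (Pi.single p (X a) - Pi.single q (X b) : Fin m → MvPolynomial (Fin n) k) =
            Pi.single p 1 - Pi.single q 1 := by
        funext i
        simp only [LinearMap.compLeft_apply, Function.comp_apply, Pi.sub_apply, Pi.single_apply]
        split_ifs <;> simp
      rw [map_add, hev, hedge]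
      abel

theorem hasLinRel_of_connected (hinj : Function.Injective F) (hcard : ∀ i, (F i).card = d)
    (hfree : Module.Free (MvPolynomial (Fin n) k)
      (LinearMap.ker (phi fun i : Fin m => ∏ l ∈ F i, (X l : MvPolynomial (Fin n) k))))
    (hconn : (syzGraph F d).Connected) :
    HasLinRel fun i : Fin m => ∏ l ∈ F i, (X l : MvPolynomial (Fin n) k) := by
  set u := fun i : Fin m => ∏ l ∈ F i, (X l : MvPolynomial (Fin n) k)
  have hu : ∀ i, (u i).IsHomogeneous d := fun i => hcard i ▸ isHomogeneous_prod_X (F i)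
  obtain ⟨i₀⟩ := hconn.nonempty
  choose w hwL hw1 hwev using fun i =>
    exists_linear_mem_span_linSyz_of_reachable (k := k) hcard (hconn.preconnected i i₀)
  let B := Module.Free.chooseBasis (MvPolynomial (Fin n) k) (LinearMap.ker (phi u))
  have hrank := card_add_one_le_finrank_of_basis_ker (f := phi u)
    (x := (Pi.single i₀ 1 : Fin m → MvPolynomial (Fin n) k))
    (by simpa [phi_single] using (Finset.prod_ne_zero_iff.2 fun l _ => X_ne_zero l)) B
  rw [Module.finrank_fintype_fun_eq_card, Fintype.card_fin] at hrank
  have hli : LinearIndependent k fun i : {i // i ≠ i₀} => w i := by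
    refine LinearIndependent.of_comp ((aeval fun _ => (1 : k)).toLinearMap.compLeft (Fin m)) ?_
    simpa only [Function.comp_def, hwev] using linearIndependent_single_sub_single (R := k) i₀
  have hsup := le_span_sup_smul_of_linearIndependent (h := fun i : {i // i ≠ i₀} => w i) B
    (fun z hz => piHomogeneousComponent_zero_of_mem_ker_phi hu (linearIndependent_prod_X hinj) hz)
    (fun i => span_linSyz_le_ker_phi u (hwL i)) (fun i => hw1 i) hli
    (by rw [show Fintype.card {i // i ≠ i₀} = m - 1 by simp]; omega)
  have hspan : Submodule.span (MvPolynomial (Fin n) k) (Set.range fun i : {i // i ≠ i₀} => w i) ≤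
      Submodule.span (MvPolynomial (Fin n) k) (linSyz u) :=
    Submodule.span_le.2 (Set.range_subset_iff.2 fun i => hwL i)
  refine le_antisymm (span_linSyz_le_ker_phi u) (le_of_le_sup_ker_constantCoeff_smul
    (fun j z hz => piHomogeneousComponent_mem_ker_phi hu j hz)
    (fun j z hz => piHomogeneousComponent_mem_span (fun _ => isHomogeneous_of_mem_linSyz) j hz)
    (hsup.trans (sup_le_sup_right hspan _)))

end SquarefreeIdeal

/-- If `m ≥ 2` and the first syzygy module `ker φ` is a free `S`-module
(i.e. `projdim I ≤ 1`), then `I` has linear relations iff `G_I` is connected. -/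
theorem stmt7 {k : Type*} [Field k] {n m d : ℕ} (hm : 2 ≤ m)
    (F : Fin m → Finset (Fin n)) (hinj : Function.Injective F)
    (hcard : ∀ i, (F i).card = d)
    (hfree : Module.Free (MvPolynomial (Fin n) k)
      (LinearMap.ker (phi (fun i : Fin m => ∏ l ∈ F i, (X l : MvPolynomial (Fin n) k))))) :
    HasLinRel (fun i : Fin m => ∏ l ∈ F i, (X l : MvPolynomial (Fin n) k)) ↔
      (syzGraph F d).Connected := by
  have : Nonempty (Fin m) := ⟨⟨0, by omega⟩⟩
  exact ⟨connected_of_hasLinRel (fun i => prod_ne_zero_iff.2 fun l _ => X_ne_zero l) _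
    (fun i j a b => syzGraph_reachable_of_X_mul_eq hinj hcard),
    hasLinRel_of_connected hinj hcard hfree⟩
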